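/- For n ≥ 3 and the terminal construction weights, a_2 + a_3 + ... + a_{n-1} + a_0 = a_n; that is, ∑_{i=2}^{n-1} (s_{n-1}-1)(s_{n-1}-2)/(2 s_{n-i}) + ((s_{n-1}-1)/2 - 1) = ((s_{n-1}-1)(s_{n-1}-2)/2 - 1)/2. -/

import Mathlib

/-
Writing `M = s_{n-1} - 1 = s_0 s_1 ⋯ s_{n-2}`, the Sylvester identity
`1/s_0 + ⋯ + 1/s_{n-2} = 1 - 1/M` becomes the integer identity `∑ M / s_j = M - 1`.
Since the `s_j` are pairwise coprime and `s_0 = 2`, every `2 s_j` with `j ≥ 1` divides `M`,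
so all the floor divisions in the statement are exact. Splitting off `j = 0` gives
`2T + 1 = M / 2` for `T = ∑_{j ≥ 1} M / (2 s_j)`, hence `s_{n-1} = 4T + 3`, and both sides
of the claimed relation equal `4T² + 3T`.
-/

def sylvester : ℕ → ℕ
  | 0 => 2
  | n + 1 => sylvester n * (sylvester n - 1) + 1

open Finset

theorem sylvester_succ_sub_one (n : ℕ) :
    sylvester (n + 1) - 1 = sylvester n * (sylvester n - 1) := by
  simp [sylvester]

theorem two_le_sylvester (n : ℕ) : 2 ≤ sylvester n := by
  induction n with
  | zero => simp [sylvester]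
  | succ n ih =>
    have := Nat.mul_le_mul ih (show 1 ≤ sylvester n - 1 by omega)
    simp only [sylvester]
    omega

theorem prod_range_sylvester (n : ℕ) : ∏ j ∈ range n, sylvester j = sylvester n - 1 := by
  induction n with
  | zero => simp [sylvester]
  | succ n ih => rw [prod_range_succ, ih, sylvester_succ_sub_one, mul_comm]

theorem sylvester_dvd_sylvester_sub_one {i j : ℕ} (h : i < j) :
    sylvester i ∣ sylvester j - 1 :=
  prod_range_sylvester j ▸ dvd_prod_of_mem _ (mem_range.2 h)

theorem two_dvd_sylvester_sub_one {n : ℕ} (hn : 0 < n) : 2 ∣ sylvester n - 1 :=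
  sylvester_dvd_sylvester_sub_one hn

theorem coprime_sylvester_of_lt {i j : ℕ} (h : i < j) :
    Nat.Coprime (sylvester i) (sylvester j) := by
  obtain ⟨c, hc⟩ := sylvester_dvd_sylvester_sub_one h
  have hj : sylvester j = 1 + c * sylvester i := by
    have := two_le_sylvester j
    rw [mul_comm]; omega
  rw [hj, Nat.coprime_add_mul_right_right]
  exact Nat.coprime_one_right _

theorem two_mul_sylvester_dvd_sylvester_sub_one {i n : ℕ} (hi : 0 < i) (h : i < n) :
    2 * sylvester i ∣ sylvester n - 1 :=
  (coprime_sylvester_of_lt hi).mul_dvd_of_dvd_of_dvd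
    (sylvester_dvd_sylvester_sub_one (hi.trans h)) (sylvester_dvd_sylvester_sub_one h)

theorem sum_range_sylvester_sub_one_div (n : ℕ) :
    ∑ j ∈ range n, (sylvester n - 1) / sylvester j + 1 = sylvester n - 1 := by
  induction n with
  | zero => simp [sylvester]
  | succ n ih =>
    have hs := two_le_sylvester n
    have hterm : ∀ j ∈ range n, (sylvester (n + 1) - 1) / sylvester j
        = sylvester n * ((sylvester n - 1) / sylvester j) := fun j hj => by
      rw [sylvester_succ_sub_one,
        Nat.mul_div_assoc _ (sylvester_dvd_sylvester_sub_one (mem_range.1 hj))]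
    rw [sum_range_succ, sum_congr rfl hterm, ← mul_sum, sylvester_succ_sub_one,
      Nat.mul_div_cancel_left _ (by omega)]
    have := congrArg (sylvester n * ·) ih
    simp only [mul_add_one] at this
    omega

theorem two_mul_sum_Ico_div_add_one {m : ℕ} (hm : 0 < m) :
    2 * ∑ j ∈ Ico 1 m, (sylvester m - 1) / (2 * sylvester j) + 1 = (sylvester m - 1) / 2 := by
  have hterm : ∀ j ∈ Ico 1 m, (sylvester m - 1) / sylvester j
      = 2 * ((sylvester m - 1) / (2 * sylvester j)) := fun j hj => by
    obtain ⟨hj1, hjm⟩ := mem_Ico.1 hj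
    rw [← Nat.mul_div_assoc _ (two_mul_sylvester_dvd_sylvester_sub_one hj1 hjm),
      Nat.mul_div_mul_left _ _ two_pos]
  have h := sum_range_sylvester_sub_one_div m
  rw [range_eq_Ico, sum_eq_sum_Ico_succ_bot hm, sum_congr rfl hterm, ← mul_sum,
    show sylvester 0 = 2 from rfl] at h
  have heven := two_dvd_sylvester_sub_one hm
  omega

theorem terminal_weights_an_relation (n : ℕ) (hn : 3 ≤ n) :
    (∑ i ∈ Finset.Icc 2 (n - 1),
        (sylvester (n - 1) - 1) * (sylvester (n - 1) - 2) / (2 * sylvester (n - i)))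
      + ((sylvester (n - 1) - 1) / 2 - 1)
      = ((sylvester (n - 1) - 1) * (sylvester (n - 1) - 2) / 2 - 1) / 2 := by
  obtain ⟨m, rfl⟩ : ∃ m, n = m + 1 := ⟨n - 1, by omega⟩
  have hm : 0 < m := by omega
  have hterm : ∀ j ∈ Ico 1 m, (sylvester m - 1) * (sylvester m - 2) / (2 * sylvester j)
      = (sylvester m - 2) * ((sylvester m - 1) / (2 * sylvester j)) := fun j hj => by
    obtain ⟨hj1, hjm⟩ := mem_Ico.1 hj
    rw [mul_comm, Nat.mul_div_assoc _ (two_mul_sylvester_dvd_sylvester_sub_one hj1 hjm)]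
  rw [Nat.add_sub_cancel, ← Ico_add_one_right_eq_Icc,
    sum_Ico_reflect (fun j => (sylvester m - 1) * (sylvester m - 2) / (2 * sylvester j)) 2
      (n := m + 1) (by omega),
    Nat.add_sub_cancel_left, show m + 1 + 1 - 2 = m by omega, sum_congr rfl hterm, ← mul_sum]
  have hT := two_mul_sum_Ico_div_add_one hm
  have heven := two_dvd_sylvester_sub_one hm
  generalize ∑ j ∈ Ico 1 m, (sylvester m - 1) / (2 * sylvester j) = T at hT ⊢
  rw [show sylvester m = 4 * T + 3 by omega, show 4 * T + 3 - 1 = 2 * (2 * T + 1) by omega,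
    show 4 * T + 3 - 2 = 4 * T + 1 by omega, mul_assoc, Nat.mul_div_cancel_left _ two_pos,
    Nat.mul_div_cancel_left _ two_pos]
  have : (2 * T + 1) * (4 * T + 1) = 2 * ((4 * T + 1) * T + 2 * T) + 1 := by ring
  omega
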